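/- Commutativity of product in the exchange model: with J^M constructed from a binary Kripke model M as W' = {u₁,u₂ : u ∈ W}, R' = {⟨v₁,u₁,u₂⟩, ⟨v₁,u₂,u₁⟩, ⟨v₂,u₁,u₂⟩, ⟨v₂,u₂,u₁⟩ : vRu}, V'(p) = {u₁,u₂ : u ∈ V(p)}, the equivalence A·B ⇔ B·A is valid in J^M: every state satisfies A·B if and only if it satisfies B·A. -/

import Mathlib

/-- Formulas of the commutative language: `·`, `→`, `∧`, `∨`, `¬`, `⊥`, `⊤`. -/
inductive FmE : Type
  | atom : ℕ → FmE
  | bot  : FmE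
  | top  : FmE
  | conj : FmE → FmE → FmE
  | disj : FmE → FmE → FmE
  | prod : FmE → FmE → FmE
  | arrow : FmE → FmE → FmE
  | neg  : FmE → FmE
  deriving DecidableEq

/-- A binary Kripke model. -/
structure KMod where
  W : Type
  ne : Nonempty W
  R : W → W → Prop
  V : ℕ → W → Prop

/-- The ternary frame relation of the exchange model `J^M`:
`R' = {⟨v₁,u₁,u₂⟩, ⟨v₁,u₂,u₁⟩, ⟨v₂,u₁,u₂⟩, ⟨v₂,u₂,u₁⟩ : vRu}`,
where `w₁ = (w, false)` and `w₂ = (w, true)`. -/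
def RE (M : KMod) (a b c : M.W × Bool) : Prop :=
  ∃ v u, M.R v u ∧ (a.1 = v) ∧
    ((b = (u, false) ∧ c = (u, true)) ∨ (b = (u, true) ∧ c = (u, false)))

/-- The valuation of `J^M`: `V'(p) = {u₁, u₂ : u ∈ V(p)}` and `V'(m) = W'`,
the distinguished letter `m` being `atom 0` (letter `p` is `atom (p+1)`). -/
def VE (M : KMod) (n : ℕ) (x : M.W × Bool) : Prop :=
  match n with
  | 0 => True
  | n + 1 => M.V n x.1

/-- Ternary satisfaction in `J^M` for the commutative language. -/
def satE (M : KMod) : FmE → M.W × Bool → Prop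
  | .atom n, u => VE M n u
  | .bot, _ => False
  | .top, _ => True
  | .conj A B, u => satE M A u ∧ satE M B u
  | .disj A B, u => satE M A u ∨ satE M B u
  | .neg A, u => ¬ satE M A u
  | .prod A B, u => ∃ v w, RE M u v w ∧ satE M A v ∧ satE M B w
  | .arrow A B, u => ∀ v w, RE M v w u → satE M A w → satE M B v

theorem RE.swap {M : KMod} {a b c : M.W × Bool} (h : RE M a b c) : RE M a c b :=
  let ⟨v, u, hR, ha, hbc⟩ := h
  ⟨v, u, hR, ha, hbc.symm.imp And.symm And.symm⟩

theorem satE_prod_swap {M : KMod} {A B : FmE} {x : M.W × Bool}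
    (h : satE M (.prod A B) x) : satE M (.prod B A) x :=
  let ⟨v, w, hR, hA, hB⟩ := h
  ⟨w, v, hR.swap, hB, hA⟩

/-- Commutativity of product in the exchange model: `A·B ⇔ B·A` is valid in
`J^M`, i.e. every state satisfies `A·B` iff it satisfies `B·A`. -/
theorem stmt18 (M : KMod) (A B : FmE) (x : M.W × Bool) :
    satE M (.prod A B) x ↔ satE M (.prod B A) x :=
  ⟨satE_prod_swap, satE_prod_swap⟩
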